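/- arXiv:2312.00730 — 2 statements merged into one kernel-verified Lean document; each statement's English description precedes it below -/
import Mathlib

section
/- Under the Crank-Nicolson update in a constant field B with v^n ⊥ B, the position displacement magnitude satisfies ‖x^{n+1} - x^n‖ = Δt ‖v^{n+1/2}‖ = 2ρ sin(θ/2), where ρ = ‖v^n‖/Ω, Ω = ‖B‖, and θ is defined by cos θ = (1 - Ω²Δt²/4)/(1 + Ω²Δt²/4) with sin(θ/2) ≥ 0. -/
open Real Filter

noncomputable def cross (a b : EuclideanSpace ℝ (Fin 3)) : EuclideanSpace ℝ (Fin 3) :=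
  WithLp.toLp 2 ![a 1 * b 2 - a 2 * b 1, a 2 * b 0 - a 0 * b 2, a 0 * b 1 - a 1 * b 0]

/-!
Eliminating `v^{n+1}` gives `v^n = v^{n+1/2} - (Δt/2) v^{n+1/2} × B`. Since `v × B ⊥ B`, the
midpoint velocity inherits `v^{n+1/2} ⊥ B` from `v^n`, and then, with `s = ΩΔt/2`,
`‖v^n‖² = (1 + s²) ‖v^{n+1/2}‖²`. The Crank-Nicolson angle is `θ = 2 arctan s`, so
`sin (θ/2) = s / √(1 + s²)`, and `2ρ sin (θ/2) = 2 s ‖v^{n+1/2}‖ / Ω = Δt ‖v^{n+1/2}‖`.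
-/

open Matrix RealInnerProductSpace

theorem cross_eq_toLp_crossProduct (a b : EuclideanSpace ℝ (Fin 3)) :
    cross a b = WithLp.toLp 2 (a.ofLp ⨯₃ b.ofLp) := rfl

theorem real_inner_eq_dotProduct {ι : Type*} [Fintype ι] (a b : EuclideanSpace ℝ ι) :
    ⟪a, b⟫ = a.ofLp ⬝ᵥ b.ofLp := by
  simp [EuclideanSpace.inner_eq_star_dotProduct, dotProduct_comm]

theorem inner_self_cross (a b : EuclideanSpace ℝ (Fin 3)) : ⟪a, cross a b⟫ = 0 := by
  rw [real_inner_eq_dotProduct, cross_eq_toLp_crossProduct]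
  exact dot_self_cross _ _

theorem inner_cross_self (a b : EuclideanSpace ℝ (Fin 3)) : ⟪cross a b, b⟫ = 0 := by
  rw [real_inner_eq_dotProduct, cross_eq_toLp_crossProduct, dotProduct_comm]
  exact dot_cross_self _ _

theorem norm_cross_sq (a b : EuclideanSpace ℝ (Fin 3)) :
    ‖cross a b‖ ^ 2 = ‖a‖ ^ 2 * ‖b‖ ^ 2 - ⟪a, b⟫ ^ 2 := by
  simp only [← real_inner_self_eq_norm_sq, real_inner_eq_dotProduct, cross_eq_toLp_crossProduct,
    cross_dot_cross, dotProduct_comm b.ofLp a.ofLp]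
  ring

theorem inner_sub_smul_cross_self (a b : EuclideanSpace ℝ (Fin 3)) (c : ℝ) :
    ⟪a - c • cross a b, b⟫ = ⟪a, b⟫ := by
  rw [inner_sub_left, real_inner_smul_left, inner_cross_self, mul_zero, sub_zero]

theorem norm_sub_smul_cross_sq (a b : EuclideanSpace ℝ (Fin 3)) (c : ℝ) :
    ‖a - c • cross a b‖ ^ 2 = ‖a‖ ^ 2 + c ^ 2 * (‖a‖ ^ 2 * ‖b‖ ^ 2 - ⟪a, b⟫ ^ 2) := by
  rw [norm_sub_sq_real, real_inner_smul_right, inner_self_cross, norm_smul, mul_pow,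
    norm_cross_sq, Real.norm_eq_abs, sq_abs]
  ring

theorem arccos_one_sub_sq_div_one_add_sq {s : ℝ} (hs : 0 ≤ s) :
    arccos ((1 - s ^ 2) / (1 + s ^ 2)) = 2 * arctan s := by
  have hcos : cos (2 * arctan s) = (1 - s ^ 2) / (1 + s ^ 2) := by
    have h1 : (0:ℝ) < 1 + s ^ 2 := by positivity
    rw [cos_two_mul, cos_arctan, div_pow, sq_sqrt h1.le]
    field_simp
    ring
  rw [← hcos, arccos_cos (by linarith [arctan_nonneg.mpr hs])
    (by linarith [arctan_lt_pi_div_two s])]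

theorem eq_sub_smul_cross_of_crankNicolson {B v0 v1 vh : EuclideanSpace ℝ (Fin 3)} {Δt : ℝ}
    (hupd : v1 = v0 + Δt • cross vh B) (hhalf : vh = (1 / 2 : ℝ) • (v0 + v1)) :
    v0 = vh - (Δt / 2) • cross vh B := by
  subst hupd
  linear_combination (norm := module) -hhalf

/-- The Crank-Nicolson position displacement magnitude is Δt‖v^{n+1/2}‖ = 2ρ sin(θ/2). -/
theorem stmt_3 (B v0 v1 vh x0 x1 : EuclideanSpace ℝ (Fin 3)) (hB : B ≠ 0)
    (Δt : ℝ) (hΔt : 0 < Δt)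
    (hx : x1 = x0 + Δt • vh)
    (hupd : v1 = v0 + Δt • cross vh B)
    (hhalf : vh = (1 / 2 : ℝ) • (v0 + v1))
    (hperp : (inner ℝ v0 B : ℝ) = 0) :
    ‖x1 - x0‖ = Δt * ‖vh‖ ∧
    ‖x1 - x0‖ = 2 * (‖v0‖ / ‖B‖) *
      Real.sin (Real.arccos ((1 - ‖B‖ ^ 2 * Δt ^ 2 / 4) / (1 + ‖B‖ ^ 2 * Δt ^ 2 / 4)) / 2) := by
  set s := ‖B‖ * Δt / 2
  have hs : 0 ≤ s := by positivity
  have hv0 := eq_sub_smul_cross_of_crankNicolson hupd hhalf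
  have hvh : ⟪vh, B⟫ = 0 := by rwa [hv0, inner_sub_smul_cross_self] at hperp
  have hsq : ‖v0‖ ^ 2 = (1 + s ^ 2) * ‖vh‖ ^ 2 := by
    rw [hv0, norm_sub_smul_cross_sq, hvh]
    ring
  have hnorm : ‖v0‖ = √(1 + s ^ 2) * ‖vh‖ := by
    rw [← sqrt_sq (norm_nonneg v0), hsq, sqrt_mul (by positivity), sqrt_sq (norm_nonneg _)]
  have hdisp : ‖x1 - x0‖ = Δt * ‖vh‖ := by
    rw [hx, add_sub_cancel_left, norm_smul, Real.norm_of_nonneg hΔt.le]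
  refine ⟨hdisp, ?_⟩
  rw [show ‖B‖ ^ 2 * Δt ^ 2 / 4 = s ^ 2 by ring, arccos_one_sub_sq_div_one_add_sq hs,
    mul_div_cancel_left₀ _ two_ne_zero, sin_arctan, hdisp, hnorm]
  have hΩ : ‖B‖ ≠ 0 := norm_ne_zero_iff.mpr hB
  field_simp
  ring
end

section
/- Given the velocity update v^{n+1} = v^n + Δt (q/m)(E + v^{n+1/2} × B + F) with v^{n+1/2} = (v^n + v^{n+1})/2, if F · v^{n+1/2} = 0, then the kinetic energy change satisfies (m/2)(‖v^{n+1}‖² - ‖v^n‖²) = q Δt (v^{n+1/2} · E). In particular, if also E · v^{n+1/2} = 0, kinetic energy is exactly conserved. -/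
open Real Filter

/-! The update gives `v1 - v0 = (Δt q / m) (E + vh × B + F)` while `v0 + v1 = 2 vh`, so the
change `‖v1‖² - ‖v0‖² = ⟪v1 - v0, v0 + v1⟫` is `2 (Δt q / m)` times the work of the total force
on the midpoint velocity. The magnetic term `vh × B` is orthogonal to `vh` and `F` does no work
by hypothesis, leaving only the work of `E`. -/

lemma inner_cross_left_self (a b : EuclideanSpace ℝ (Fin 3)) :
    (inner ℝ (cross a b) a : ℝ) = 0 := by
  simp only [EuclideanSpace.inner_eq_star_dotProduct]
  simp [dotProduct, Fin.sum_univ_three, cross]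
  ring

lemma norm_sq_sub_norm_sq_eq_two_inner_sub_half_add {V : Type*} [NormedAddCommGroup V]
    [InnerProductSpace ℝ V] (u v : V) :
    ‖v‖ ^ 2 - ‖u‖ ^ 2 = 2 * (inner ℝ (v - u) ((1 / 2 : ℝ) • (u + v)) : ℝ) := by
  rw [inner_smul_right, inner_sub_left, inner_add_right, inner_add_right,
    real_inner_self_eq_norm_sq, real_inner_self_eq_norm_sq, real_inner_comm u v]
  ring

/-- Energy theorem for the implicit midpoint update with an added effective
force doing no work: the kinetic-energy change equals qΔt v^{n+1/2}·E, and if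
moreover E·v^{n+1/2} = 0 the kinetic energy is exactly conserved. -/
theorem stmt_11 (Efld B F v0 v1 vh : EuclideanSpace ℝ (Fin 3))
    (q m Δt : ℝ) (hm : m ≠ 0)
    (hupd : v1 = v0 + (Δt * (q / m)) • (Efld + cross vh B + F))
    (hhalf : vh = (1 / 2 : ℝ) • (v0 + v1))
    (hF : (inner ℝ F vh : ℝ) = 0) :
    m / 2 * (‖v1‖ ^ 2 - ‖v0‖ ^ 2) = q * Δt * (inner ℝ vh Efld : ℝ) ∧
    ((inner ℝ Efld vh : ℝ) = 0 → m / 2 * ‖v1‖ ^ 2 = m / 2 * ‖v0‖ ^ 2) := by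
  have hwork : (inner ℝ (Efld + cross vh B + F) vh : ℝ) = inner ℝ vh Efld := by
    rw [inner_add_left, inner_add_left, inner_cross_left_self, hF, real_inner_comm]
    ring
  have henergy : m / 2 * (‖v1‖ ^ 2 - ‖v0‖ ^ 2) = q * Δt * (inner ℝ vh Efld : ℝ) := by
    rw [norm_sq_sub_norm_sq_eq_two_inner_sub_half_add, ← hhalf, hupd, add_sub_cancel_left,
      inner_smul_left, hwork]
    simp only [conj_trivial]
    field_simp
  refine ⟨henergy, fun hE => ?_⟩
  rw [real_inner_comm, hE, mul_zero] at henergy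
  linarith
end
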